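/- arXiv:math/0605209 — 3 statements merged into one kernel-verified Lean document; each statement's English description precedes it below -/
import Mathlib

section
/- Let τ ∈ ℝ, r ≥ 2 a real number (playing the role of 2^{k'}), and ρ > 0 (playing the role of 2^{j+1}). Then the Lebesgue measure of the set {ξ₁ ∈ ℝ : r/2 ≤ |ξ₁| ≤ 2r and |τ + ξ₁²| ≤ ρ} is at most C·min(r, ρ/r) for an absolute constant C. -/
open MeasureTheory

/-- Measure of the set of frequencies ξ₁ of size ≈ r with |τ + ξ₁²| ≤ ρ is at most
C·min(r, ρ/r). -/
theorem measure_freq_set_le :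
    ∃ C : ℝ, 0 < C ∧ ∀ (τ r ρ : ℝ), 2 ≤ r → 0 < ρ →
      volume {ξ₁ : ℝ | r / 2 ≤ |ξ₁| ∧ |ξ₁| ≤ 2 * r ∧ |τ + ξ₁ ^ 2| ≤ ρ}
        ≤ ENNReal.ofReal (C * min r (ρ / r)) := by
  refine ⟨8, by norm_num, fun τ r ρ hr hρ => ?_⟩
  set S := {ξ₁ : ℝ | r / 2 ≤ |ξ₁| ∧ |ξ₁| ≤ 2 * r ∧ |τ + ξ₁ ^ 2| ≤ ρ} with hS
  have hr0 : (0:ℝ) < r := by linarith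
  rcases le_total r (ρ / r) with hmin | hmin
  · have hsub : S ⊆ Set.Icc (-(2*r)) (2*r) := by
      intro x hx
      obtain ⟨_, h2, _⟩ := hx
      constructor
      · linarith [neg_abs_le x]
      · linarith [le_abs_self x]
    calc volume S ≤ volume (Set.Icc (-(2*r)) (2*r)) := measure_mono hsub
      _ = ENNReal.ofReal (2*r - -(2*r)) := Real.volume_Icc
      _ ≤ ENNReal.ofReal (8 * min r (ρ/r)) := by
          rw [min_eq_left hmin]
          exact ENNReal.ofReal_le_ofReal (by linarith)
  · -- distance estimate for same-sign points
    have hdiff : ∀ x ∈ S, ∀ y ∈ S, 2*ρ ≥ |x - y| * |x + y| := by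
      intro x hx y hy
      obtain ⟨_, _, hx3⟩ := hx
      obtain ⟨_, _, hy3⟩ := hy
      have h2 : |x^2 - y^2| ≤ 2 * ρ := by
        calc |x^2 - y^2| = |(τ + x^2) - (τ + y^2)| := by ring_nf
          _ ≤ |τ + x^2| + |τ + y^2| := abs_sub _ _
          _ ≤ 2*ρ := by linarith
      have h3 : x^2 - y^2 = (x-y)*(x+y) := by ring
      rw [h3, abs_mul] at h2
      linarith
    have hpos : ∀ x ∈ S, ∀ y ∈ S, 0 ≤ x → 0 ≤ y → |x - y| ≤ 2 * ρ / r := by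
      intro x hx y hy hx0 hy0
      have h := hdiff x hx y hy
      have hx1 := hx.1; have hy1 := hy.1
      rw [abs_of_nonneg hx0] at hx1
      rw [abs_of_nonneg hy0] at hy1
      have hsum : r ≤ x + y := by linarith
      rw [abs_of_nonneg (by linarith : (0:ℝ) ≤ x + y)] at h
      rw [le_div_iff₀ hr0]
      calc |x - y| * r ≤ |x - y| * (x + y) :=
            mul_le_mul_of_nonneg_left hsum (abs_nonneg _)
        _ ≤ 2*ρ := h
    have hneg : ∀ x ∈ S, ∀ y ∈ S, x < 0 → y < 0 → |x - y| ≤ 2 * ρ / r := by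
      intro x hx y hy hx0 hy0
      have h := hdiff x hx y hy
      have hx1 := hx.1; have hy1 := hy.1
      rw [abs_of_neg hx0] at hx1
      rw [abs_of_neg hy0] at hy1
      have hsum : x + y ≤ -r := by linarith
      rw [abs_of_nonpos (by linarith : x + y ≤ 0)] at h
      rw [le_div_iff₀ hr0]
      calc |x - y| * r ≤ |x - y| * (-(x + y)) :=
            mul_le_mul_of_nonneg_left (by linarith) (abs_nonneg _)
        _ ≤ 2*ρ := h
    have hsplit : S ⊆ (S ∩ Set.Ici 0) ∪ (S ∩ Set.Iio 0) := by
      intro x hx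
      rcases le_or_gt 0 x with h | h
      · exact Or.inl ⟨hx, h⟩
      · exact Or.inr ⟨hx, h⟩
    have bound : ∀ T : Set ℝ, T ⊆ S →
        (∀ x ∈ T, ∀ y ∈ T, |x - y| ≤ 2 * ρ / r) →
        volume T ≤ ENNReal.ofReal (4 * (ρ / r)) := by
      intro T hTS hT
      rcases T.eq_empty_or_nonempty with he | ⟨x₀, hx₀⟩
      · simp [he]
      · have hsub : T ⊆ Set.Icc (x₀ - 2*ρ/r) (x₀ + 2*ρ/r) := by
          intro x hx
          have h := hT x hx x₀ hx₀
          have h' := abs_le.mp h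
          constructor <;> [linarith [h'.1]; linarith [h'.2]]
        calc volume T ≤ volume (Set.Icc (x₀ - 2*ρ/r) (x₀ + 2*ρ/r)) := measure_mono hsub
          _ = ENNReal.ofReal ((x₀ + 2*ρ/r) - (x₀ - 2*ρ/r)) := Real.volume_Icc
          _ ≤ ENNReal.ofReal (4 * (ρ / r)) := by
              apply ENNReal.ofReal_le_ofReal
              have : (x₀ + 2*ρ/r) - (x₀ - 2*ρ/r) = 4 * (ρ/r) := by ring
              linarith [this.le]
    have h1 : volume (S ∩ Set.Ici 0) ≤ ENNReal.ofReal (4 * (ρ / r)) := by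
      apply bound _ Set.inter_subset_left
      rintro x ⟨hxS, hx0⟩ y ⟨hyS, hy0⟩
      exact hpos x hxS y hyS hx0 hy0
    have h2 : volume (S ∩ Set.Iio 0) ≤ ENNReal.ofReal (4 * (ρ / r)) := by
      apply bound _ Set.inter_subset_left
      rintro x ⟨hxS, hx0⟩ y ⟨hyS, hy0⟩
      exact hneg x hxS y hyS hx0 hy0
    have hρr : (0:ℝ) ≤ 4 * (ρ / r) := by positivity
    calc volume S ≤ volume ((S ∩ Set.Ici 0) ∪ (S ∩ Set.Iio 0)) := measure_mono hsplit
      _ ≤ volume (S ∩ Set.Ici 0) + volume (S ∩ Set.Iio 0) := measure_union_le _ _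
      _ ≤ ENNReal.ofReal (4 * (ρ / r)) + ENNReal.ofReal (4 * (ρ / r)) := add_le_add h1 h2
      _ = ENNReal.ofReal (8 * (ρ / r)) := by
          rw [← ENNReal.ofReal_add hρr hρr]; ring_nf
      _ ≤ ENNReal.ofReal (8 * min r (ρ/r)) := by rw [min_eq_right hmin]
end

section
/- Let ψ : ℝ → ℝ be a Schwartz function. Then there is a constant C such that for all μ, μ' ∈ ℝ: |(ψ̂(μ-μ') - ψ̂(μ))·(μ'+i)/μ'| ≤ C·[(1+|μ|)^{-4} + (1+|μ-μ'|)^{-4}], where ψ̂ denotes the Fourier transform of ψ and the quotient is interpreted via the mean value theorem when μ' = 0. -/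
set_option maxHeartbeats 1000000


open Complex

/-- Kernel bound for the Duhamel operator: for ψ Schwartz,
|(ψ̂(μ-μ') - ψ̂(μ))·(μ'+i)/μ'| ≤ C·[(1+|μ|)⁻⁴ + (1+|μ-μ'|)⁻⁴]. -/
theorem duhamel_kernel_bound (ψ : SchwartzMap ℝ ℝ) :
    ∃ C : ℝ, 0 < C ∧ ∀ μ μ' : ℝ,
      ‖(((FourierTransform.fourier (fun x => (ψ x : ℂ)) (μ - μ')
            - FourierTransform.fourier (fun x => (ψ x : ℂ)) μ) * ((μ' : ℂ) + Complex.I)) / (μ' : ℂ))‖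
        ≤ C * ((1 + |μ|) ^ (-4 : ℤ) + (1 + |μ - μ'|) ^ (-4 : ℤ)) := by
  -- complexification of ψ as a Schwartz map
  set g : SchwartzMap ℝ ℂ := SchwartzMap.bilinLeftCLM
      ((ContinuousLinearMap.mul ℝ ℂ).comp Complex.ofRealCLM)
      (Function.HasTemperateGrowth.const (1 : ℂ)) ψ with hgdef
  have hgfun : (fun x : ℝ => (ψ x : ℂ)) = ⇑g := by
    funext x
    show (ψ x : ℂ) = (ψ x : ℂ) * 1
    rw [mul_one]
  -- its Fourier transform, as a Schwartz map
  set φ : SchwartzMap ℝ ℂ := SchwartzMap.fourierTransformCLM ℝ g with hφdef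
  have hF : ∀ ξ : ℝ, FourierTransform.fourier (fun x => (ψ x : ℂ)) ξ = φ ξ := by
    intro ξ
    rw [hgfun]
    rfl
  -- decay bounds for Schwartz maps
  have key : ∀ f : SchwartzMap ℝ ℂ, ∃ c : ℝ, 0 ≤ c ∧
      ∀ x : ℝ, ‖f x‖ ≤ c / (1 + |x|) ^ 4 := by
    intro f
    refine ⟨2 ^ 4 * ((Finset.Iic ((4 : ℕ), (0 : ℕ))).sup
        (fun m => SchwartzMap.seminorm ℝ m.1 m.2) f),
      by positivity, fun x => ?_⟩
    have h := SchwartzMap.one_add_le_sup_seminorm_apply (𝕜 := ℝ)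
      (m := ((4 : ℕ), (0 : ℕ))) le_rfl le_rfl f x
    rw [norm_iteratedFDeriv_zero, Real.norm_eq_abs] at h
    have hpos : (0 : ℝ) < (1 + |x|) ^ 4 := by positivity
    rw [le_div_iff₀ hpos, mul_comm]
    exact h
  obtain ⟨c₀, hc₀, h₀⟩ := key φ
  obtain ⟨c₁, hc₁, h₁⟩ := key (SchwartzMap.derivCLM ℝ ℂ φ)
  set B := max c₀ c₁ with hBdef
  have hB : 0 ≤ B := le_trans hc₀ (le_max_left _ _)
  have hfbd : ∀ x : ℝ, ‖φ x‖ ≤ B / (1 + |x|) ^ 4 := fun x =>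
    (h₀ x).trans (by gcongr; exact le_max_left _ _)
  have hdbd : ∀ x : ℝ, ‖deriv φ x‖ ≤ B / (1 + |x|) ^ 4 := by
    intro x
    rw [← SchwartzMap.derivCLM_apply (𝕜 := ℝ)]
    exact (h₁ x).trans (by gcongr; exact le_max_right _ _)
  clear_value φ g B
  refine ⟨32 * B + 1, by positivity, fun μ μ' => ?_⟩
  have hz : ∀ t : ℝ, t ^ (-4 : ℤ) = (t ^ 4)⁻¹ := fun t => by
    rw [zpow_neg]; norm_cast
  rw [hF, hF, hz, hz]
  have ht₁ : (0 : ℝ) < (1 + |μ|) ^ 4 := by positivity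
  have ht₂ : (0 : ℝ) < (1 + |μ - μ'|) ^ 4 := by positivity
  rcases eq_or_ne μ' 0 with h0 | h0
  · subst h0
    simp only [Complex.ofReal_zero, div_zero, norm_zero]
    positivity
  have hμ' : (0 : ℝ) < |μ'| := abs_pos.mpr h0
  have habs : ‖(φ (μ - μ') - φ μ) * ((μ' : ℂ) + Complex.I) / (μ' : ℂ)‖
      = ‖φ (μ - μ') - φ μ‖ * ‖(μ' : ℂ) + Complex.I‖ / |μ'| := by
    rw [norm_div, norm_mul, Complex.norm_real, Real.norm_eq_abs]
  rw [habs]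
  have hI : ‖(μ' : ℂ) + Complex.I‖ ≤ |μ'| + 1 := by
    refine (norm_add_le _ _).trans ?_
    rw [Complex.norm_real, Real.norm_eq_abs, Complex.norm_I]
  rcases le_or_gt 1 |μ'| with h1 | h1
  · -- |μ'| ≥ 1 : use decay of φ directly
    have hIle : ‖(μ' : ℂ) + Complex.I‖ ≤ 2 * |μ'| := hI.trans (by linarith)
    have hsub : ‖φ (μ - μ') - φ μ‖ ≤ B / (1 + |μ - μ'|) ^ 4 + B / (1 + |μ|) ^ 4 :=
      (norm_sub_le _ _).trans (add_le_add (hfbd _) (hfbd _))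
    calc ‖φ (μ - μ') - φ μ‖ * ‖(μ' : ℂ) + Complex.I‖ / |μ'|
        ≤ (B / (1 + |μ - μ'|) ^ 4 + B / (1 + |μ|) ^ 4) * (2 * |μ'|) / |μ'| := by
          gcongr
      _ = 2 * (B / (1 + |μ - μ'|) ^ 4 + B / (1 + |μ|) ^ 4) := by
          field_simp
      _ ≤ (32 * B + 1) * (((1 + |μ|) ^ 4)⁻¹ + ((1 + |μ - μ'|) ^ 4)⁻¹) := by
          rw [div_eq_mul_inv, div_eq_mul_inv]
          have e₁ : (0:ℝ) ≤ ((1 + |μ|) ^ 4)⁻¹ := by positivity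
          have e₂ : (0:ℝ) ≤ ((1 + |μ - μ'|) ^ 4)⁻¹ := by positivity
          nlinarith [mul_nonneg hB e₁, mul_nonneg hB e₂]
  · -- |μ'| < 1 : mean value theorem
    have hIle : ‖(μ' : ℂ) + Complex.I‖ ≤ 2 := hI.trans (by linarith)
    obtain ⟨D, hDdef⟩ : ∃ D : ℝ, D = 16 * B / (1 + |μ|) ^ 4 := ⟨_, rfl⟩
    have hD0 : 0 ≤ D := by rw [hDdef]; positivity
    have hder : ∀ ξ ∈ Set.uIcc (μ - μ') μ, ‖deriv φ ξ‖ ≤ D := by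
      intro ξ hξ
      have hdist : |μ - ξ| ≤ |μ'| := by
        have := Set.abs_sub_right_of_mem_uIcc hξ
        simpa using this
      have h2 : 1 + |μ| ≤ 2 * (1 + |ξ|) := by
        have : |μ| ≤ |ξ| + |μ - ξ| := by
          linarith [abs_sub_abs_le_abs_sub μ ξ]
        have := abs_nonneg ξ
        linarith
      have h16 : (1 + |μ|) ^ 4 ≤ 16 * (1 + |ξ|) ^ 4 := by
        have hp := pow_le_pow_left₀ (by positivity) h2 4
        calc (1 + |μ|) ^ 4 ≤ (2 * (1 + |ξ|)) ^ 4 := hp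
          _ = 16 * (1 + |ξ|) ^ 4 := by ring
      refine (hdbd ξ).trans ?_
      rw [hDdef, div_le_div_iff₀ (by positivity) ht₁]
      calc B * (1 + |μ|) ^ 4 ≤ B * (16 * (1 + |ξ|) ^ 4) :=
            mul_le_mul_of_nonneg_left h16 hB
        _ = 16 * B * (1 + |ξ|) ^ 4 := by ring
    have hmvt : ‖φ (μ - μ') - φ μ‖ ≤ D * |μ'| := by
      have := (convex_uIcc (μ - μ') μ).norm_image_sub_le_of_norm_deriv_le
        (f := ⇑φ) (fun x _ => φ.differentiable.differentiableAt)
        hder Set.right_mem_uIcc Set.left_mem_uIcc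
      have he : μ - μ' - μ = -μ' := by ring
      rwa [he, norm_neg, Real.norm_eq_abs] at this
    calc ‖φ (μ - μ') - φ μ‖ * ‖(μ' : ℂ) + Complex.I‖ / |μ'|
        ≤ (D * |μ'|) * 2 / |μ'| := by
          gcongr
      _ = 2 * D := by field_simp
      _ ≤ (32 * B + 1) * (((1 + |μ|) ^ 4)⁻¹ + ((1 + |μ - μ'|) ^ 4)⁻¹) := by
          rw [hDdef, div_eq_mul_inv]
          have e₁ : (0:ℝ) ≤ ((1 + |μ|) ^ 4)⁻¹ := by positivity
          have e₂ : (0:ℝ) ≤ ((1 + |μ - μ'|) ^ 4)⁻¹ := by positivity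
          nlinarith [mul_nonneg hB e₁, mul_nonneg hB e₂]
end

section
/- Let k' ≥ 1 be an integer and j ≤ 2k'-80 an integer, and let m : ℝ → ℂ be smooth and supported in [-2,2]. Let η be a smooth bump supported in [2^{k'-2}, 2^{k'+2}] with |η^{(α)}| ≤ C_α 2^{-αk'} for α ≤ 10. Then for any M with M² ∈ [2^{2k'-70}, 2^{2k'+10}], the kernel K(x₁) = ∫_ℝ e^{ix₁ξ₁} m((ξ₁² - M²)/2^j) η(ξ₁) dξ₁ satisfies |K(x₁)| ≤ C·2^{j-k'}·(1 + (2^{j-k'}x₁)²)^{-1} for all x₁ ∈ ℝ, with C depending only on m and the constants C_α. -/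
open Complex MeasureTheory Set

lemma aux_deriv_zero {E : Type*} [NormedAddCommGroup E] [NormedSpace ℝ E]
    {g : ℝ → E} {s : Set ℝ} (hs : IsClosed s) (h0 : ∀ x ∉ s, g x = 0)
    {x : ℝ} (hx : x ∉ s) : deriv g x = 0 := by
  have hev : g =ᶠ[nhds x] fun _ => 0 := by
    filter_upwards [hs.isOpen_compl.mem_nhds hx] with y hy using h0 y hy
  rw [hev.deriv_eq, deriv_const]

lemma aux_hasDerivAt_zero {g g' : ℝ → ℂ} {s : Set ℝ} (hs : IsClosed s)
    (hg : ∀ x, HasDerivAt g (g' x) x) (h0 : ∀ x ∉ s, g x = 0)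
    {x : ℝ} (hx : x ∉ s) : g' x = 0 := by
  rw [← (hg x).deriv]; exact aux_deriv_zero hs h0 hx

lemma aux_integral_deriv_zero {g g' : ℝ → ℂ} (a b : ℝ) (hab : a ≤ b)
    (hg : ∀ x, HasDerivAt g (g' x) x) (hc : Continuous g')
    (h0 : ∀ x ∉ Icc a b, g x = 0) :
    ∫ x, g' x = 0 := by
  have hz : ∀ x ∉ Icc a b, g' x = 0 := fun x hx => aux_hasDerivAt_zero isClosed_Icc hg h0 hx
  have hsub : Icc a b ⊆ Icc (a-1) (b+1) := Icc_subset_Icc (by linarith) (by linarith)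
  have hz' : ∀ x ∉ Icc (a-1) (b+1), g' x = 0 := fun x hx => hz x (fun h => hx (hsub h))
  rw [← setIntegral_eq_integral_of_forall_compl_eq_zero hz', integral_Icc_eq_integral_Ioc,
    ← intervalIntegral.integral_of_le (by linarith)]
  rw [intervalIntegral.integral_eq_sub_of_hasDerivAt (fun x _ => hg x) (hc.intervalIntegrable _ _)]
  rw [h0 (b+1) (by simp only [mem_Icc, not_and_or, not_le]; right; linarith), h0 (a-1) (by simp only [mem_Icc, not_and_or, not_le]; left; linarith), sub_zero]

lemma aux_ibp {f f' : ℝ → ℂ} (x a b : ℝ) (hab : a ≤ b)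
    (hf : ∀ ξ, HasDerivAt f (f' ξ) ξ) (hcf : Continuous f) (hc : Continuous f')
    (h0 : ∀ ξ ∉ Icc a b, f ξ = 0) :
    ∫ ξ : ℝ, Complex.exp (Complex.I * x * ξ) * f' ξ
      = -(Complex.I * x) * ∫ ξ : ℝ, Complex.exp (Complex.I * x * ξ) * f ξ := by
  set e : ℝ → ℂ := fun ξ => Complex.exp (Complex.I * x * ξ) with he
  have hce : Continuous e := by
    exact Complex.continuous_exp.comp (by continuity)
  have hde : ∀ ξ : ℝ, HasDerivAt e (Complex.I * x * e ξ) ξ := by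
    intro ξ
    have h1 : HasDerivAt (fun ξ : ℝ => (ξ : ℂ)) 1 ξ := (hasDerivAt_id ξ).ofReal_comp
    have h2 := (h1.const_mul (Complex.I * x)).cexp
    have : e = fun ξ : ℝ => Complex.exp (Complex.I * x * ξ) := he
    rw [this]
    convert h2 using 1; ring
  have hg : ∀ ξ, HasDerivAt (fun ξ => e ξ * f ξ)
      (Complex.I * x * e ξ * f ξ + e ξ * f' ξ) ξ := fun ξ => (hde ξ).mul (hf ξ)
  have h00 : ∀ ξ ∉ Icc a b, e ξ * f ξ = 0 := fun ξ hξ => by rw [h0 ξ hξ, mul_zero]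
  have hint := aux_integral_deriv_zero a b hab hg
    (by fun_prop) h00
  have hi1 : Integrable (fun ξ => Complex.I * x * e ξ * f ξ) := by
    apply Continuous.integrable_of_hasCompactSupport (by fun_prop)
    exact HasCompactSupport.intro isCompact_Icc (fun ξ hξ => by rw [h0 ξ hξ, mul_zero])
  have hi2 : Integrable (fun ξ => e ξ * f' ξ) := by
    apply Continuous.integrable_of_hasCompactSupport (by fun_prop)
    refine HasCompactSupport.intro (isCompact_Icc (a:=a) (b:=b)) (fun ξ hξ => ?_)
    rw [aux_hasDerivAt_zero isClosed_Icc hf h0 hξ, mul_zero]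
  rw [integral_add hi1 hi2] at hint
  have : ∫ ξ, Complex.I * x * e ξ * f ξ = (Complex.I * x) * ∫ ξ, e ξ * f ξ := by
    rw [← integral_const_mul]; congr 1; ext ξ; ring
  rw [this] at hint
  linear_combination hint

set_option maxHeartbeats 1600000 in
/-- Integration-by-parts kernel bound for modulation cutoffs acting on lateral
spaces: the kernel of m((ξ₁²-M²)/2^j)·η(ξ₁) behaves like a bump of width 2^{j-k'}. -/
theorem modulation_cutoff_kernel_bound
    (m : ℝ → ℂ) (hm : ContDiff ℝ (⊤ : ℕ∞) m) (hmsupp : ∀ μ, m μ ≠ 0 → |μ| ≤ 2)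
    (Cα : ℕ → ℝ) :
    ∃ C : ℝ, 0 < C ∧ ∀ (k' j : ℤ), 1 ≤ k' → j ≤ 2 * k' - 80 →
      ∀ η : ℝ → ℝ, ContDiff ℝ (⊤ : ℕ∞) η →
      (∀ ξ₁, η ξ₁ ≠ 0 → ξ₁ ∈ Set.Icc ((2 : ℝ) ^ (k' - 2)) ((2 : ℝ) ^ (k' + 2))) →
      (∀ α : ℕ, α ≤ 10 → ∀ ξ₁, |iteratedDeriv α η ξ₁| ≤ Cα α * (2 : ℝ) ^ (-(α : ℤ) * k')) →
      ∀ M : ℝ, M ^ 2 ∈ Set.Icc ((2 : ℝ) ^ (2 * k' - 70)) ((2 : ℝ) ^ (2 * k' + 10)) →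
      ∀ x₁ : ℝ,
        ‖∫ ξ₁ : ℝ, Complex.exp (Complex.I * x₁ * ξ₁) *
            m ((ξ₁ ^ 2 - M ^ 2) / (2 : ℝ) ^ j) * (η ξ₁ : ℂ)‖
          ≤ C * (2 : ℝ) ^ (j - k') * (1 + ((2 : ℝ) ^ (j - k') * x₁) ^ 2)⁻¹ := by
  classical
  replace hm : ContDiff ℝ (⊤:ℕ∞) m := hm.of_le (by simp)
  have hone : ((⊤:ℕ∞) : WithTop ℕ∞) ≠ 0 := by simp
  -- smoothness and support of m and its derivatives
  have hm1 : ContDiff ℝ (⊤:ℕ∞) (deriv m) := (contDiff_infty_iff_deriv.mp hm).2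
  have hm2 : ContDiff ℝ (⊤:ℕ∞) (deriv (deriv m)) := (contDiff_infty_iff_deriv.mp hm1).2
  have hm0out : ∀ y : ℝ, y ∉ Icc (-2:ℝ) 2 → m y = 0 := by
    intro y hy
    by_contra h
    exact hy (abs_le.mp (hmsupp y h))
  have hm1out : ∀ y : ℝ, y ∉ Icc (-2:ℝ) 2 → deriv m y = 0 :=
    fun y hy => aux_deriv_zero isClosed_Icc hm0out hy
  have hm2out : ∀ y : ℝ, y ∉ Icc (-2:ℝ) 2 → deriv (deriv m) y = 0 :=
    fun y hy => aux_deriv_zero isClosed_Icc hm1out hy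
  have hms : HasCompactSupport m := HasCompactSupport.intro isCompact_Icc hm0out
  obtain ⟨C0', hC0'⟩ := hms.exists_bound_of_continuous hm.continuous
  obtain ⟨C1', hC1'⟩ := (HasCompactSupport.intro (isCompact_Icc (a:=(-2:ℝ)) (b:=2))
    hm1out).exists_bound_of_continuous hm1.continuous
  obtain ⟨C2', hC2'⟩ := (HasCompactSupport.intro (isCompact_Icc (a:=(-2:ℝ)) (b:=2))
    hm2out).exists_bound_of_continuous hm2.continuous
  set C0 := max C0' 0 with hC0def
  set C1 := max C1' 0 with hC1def
  set C2 := max C2' 0 with hC2def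
  have hC0 : ∀ y, ‖m y‖ ≤ C0 := fun y => le_trans (hC0' y) (le_max_left _ _)
  have hC1 : ∀ y, ‖deriv m y‖ ≤ C1 := fun y => le_trans (hC1' y) (le_max_left _ _)
  have hC2 : ∀ y, ‖deriv (deriv m) y‖ ≤ C2 := fun y => le_trans (hC2' y) (le_max_left _ _)
  have hC0n : 0 ≤ C0 := le_max_right _ _
  have hC1n : 0 ≤ C1 := le_max_right _ _
  have hC2n : 0 ≤ C2 := le_max_right _ _
  set K0 := max (Cα 0) 0 with hK0def
  set K1 := max (Cα 1) 0 with hK1def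
  set K2 := max (Cα 2) 0 with hK2def
  have hK0n : 0 ≤ K0 := le_max_right _ _
  have hK1n : 0 ≤ K1 := le_max_right _ _
  have hK2n : 0 ≤ K2 := le_max_right _ _
  refine ⟨2048 * (C0 + C1 + C2 + 1) * (K0 + K1 + K2 + 1),
    mul_pos (mul_pos (by norm_num) (by linarith)) (by linarith), ?_⟩
  intro k' j hk' hj η hη hηsupp hηb M hM x₁
  replace hη : ContDiff ℝ (⊤:ℕ∞) η := hη.of_le (by simp)
  -- notation
  set c : ℝ := (2:ℝ) ^ j with hcdef
  set l : ℝ := (2:ℝ) ^ (k' - 2) with hldef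
  set L : ℝ := (2:ℝ) ^ (k' + 2) with hLdef
  set u : ℝ := (2:ℝ) ^ (j - k') with hudef
  set P : ℝ := (2:ℝ) ^ (k' + 3 - j) with hPdef
  set r : ℝ := (2:ℝ) ^ (j - k' + 3) with hrdef
  set N : ℝ := |M| with hNdef
  have h2pos : (0:ℝ) < 2 := by norm_num
  have h2ne : (2:ℝ) ≠ 0 := by norm_num
  have hc : 0 < c := zpow_pos h2pos _
  have hl : 0 < l := zpow_pos h2pos _
  have hL0 : 0 < L := zpow_pos h2pos _
  have hu : 0 < u := zpow_pos h2pos _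
  have hP0 : 0 < P := zpow_pos h2pos _
  have hr0 : 0 < r := zpow_pos h2pos _
  have hN0 : 0 ≤ N := abs_nonneg M
  have hlL : l ≤ L := zpow_le_zpow_right₀ one_le_two (by linarith)
  -- η facts
  have hηd : Differentiable ℝ η := hη.differentiable hone
  have hη1 : ContDiff ℝ (⊤:ℕ∞) (deriv η) := (contDiff_infty_iff_deriv.mp hη).2
  have hη2 : ContDiff ℝ (⊤:ℕ∞) (deriv (deriv η)) := (contDiff_infty_iff_deriv.mp hη1).2
  have hη0 : ∀ ξ, ξ ∉ Icc l L → η ξ = 0 := by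
    intro ξ hξ; by_contra h; exact hξ (hηsupp ξ h)
  have hη0' : ∀ ξ, ξ ∉ Icc l L → deriv η ξ = 0 :=
    fun ξ hξ => aux_deriv_zero isClosed_Icc hη0 hξ
  have hη0'' : ∀ ξ, ξ ∉ Icc l L → deriv (deriv η) ξ = 0 :=
    fun ξ hξ => aux_deriv_zero isClosed_Icc hη0' hξ
  have hb0 : ∀ ξ, |η ξ| ≤ K0 := by
    intro ξ
    have := hηb 0 (by norm_num) ξ
    simp only [iteratedDeriv_zero, Nat.cast_zero, neg_zero, zero_mul, zpow_zero, mul_one] at this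
    exact le_trans this (le_max_left _ _)
  have hb1 : ∀ ξ, |deriv η ξ| ≤ K1 * (2:ℝ) ^ (-k') := by
    intro ξ
    have h := hηb 1 (by norm_num) ξ
    rw [iteratedDeriv_one] at h
    have e : (-((1:ℕ):ℤ) * k') = -k' := by push_cast; ring
    rw [e] at h
    exact le_trans h (mul_le_mul_of_nonneg_right (le_max_left _ _) (zpow_pos h2pos _).le)
  have hb2 : ∀ ξ, |deriv (deriv η) ξ| ≤ K2 * (2:ℝ) ^ (-(2*k')) := by
    intro ξ
    have h := hηb 2 (by norm_num) ξ
    rw [iteratedDeriv_succ, iteratedDeriv_one] at h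
    have e : (-((2:ℕ):ℤ) * k') = -(2*k') := by push_cast; ring
    rw [e] at h
    exact le_trans h (mul_le_mul_of_nonneg_right (le_max_left _ _) (zpow_pos h2pos _).le)
  -- the functions
  set φ : ℝ → ℝ := fun ξ => (ξ ^ 2 - M ^ 2) / c with hφdef
  set f : ℝ → ℂ := fun ξ => m (φ ξ) * (η ξ : ℂ) with hfdef
  set f1 : ℝ → ℂ := fun ξ => deriv m (φ ξ) * ((2 * ξ / c * η ξ : ℝ) : ℂ)
      + m (φ ξ) * ((deriv η ξ : ℝ) : ℂ) with hf1def
  set f2 : ℝ → ℂ := fun ξ => deriv (deriv m) (φ ξ) * (((2 * ξ / c) ^ 2 * η ξ : ℝ) : ℂ)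
      + deriv m (φ ξ) * ((2 / c * η ξ + 2 * (2 * ξ / c) * deriv η ξ : ℝ) : ℂ)
      + m (φ ξ) * ((deriv (deriv η) ξ : ℝ) : ℂ) with hf2def
  have hφc : Continuous φ := by fun_prop
  have hfc : Continuous f := (hm.continuous.comp hφc).mul (continuous_ofReal.comp hη.continuous)
  have hf1c : Continuous f1 := by
    apply Continuous.add
    · exact (hm1.continuous.comp hφc).mul (continuous_ofReal.comp
        (((continuous_const.mul continuous_id).div_const c).mul hη.continuous))
    · exact (hm.continuous.comp hφc).mul (continuous_ofReal.comp hη1.continuous)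
  have hf2c : Continuous f2 := by
    apply Continuous.add
    apply Continuous.add
    · exact (hm2.continuous.comp hφc).mul (continuous_ofReal.comp
        ((((continuous_const.mul continuous_id).div_const c).pow 2).mul hη.continuous))
    · exact (hm1.continuous.comp hφc).mul (continuous_ofReal.comp
        (((continuous_const.mul hη.continuous)).add
          ((continuous_const.mul ((continuous_const.mul continuous_id).div_const c)).mul hη1.continuous)))
    · exact (hm.continuous.comp hφc).mul (continuous_ofReal.comp hη2.continuous)
  -- derivatives
  have hφ' : ∀ ξ, HasDerivAt φ (2 * ξ / c) ξ := by
    intro ξ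
    have := ((hasDerivAt_pow 2 ξ).sub_const (M ^ 2)).div_const c
    convert this using 1
    rfl
    rfl
    rw [show (2:ℕ) - 1 = 1 from rfl, pow_one, Nat.cast_ofNat]
  have hmd : ∀ y, HasDerivAt m (deriv m y) y := fun y => (hm.differentiable hone y).hasDerivAt
  have hmd1 : ∀ y, HasDerivAt (deriv m) (deriv (deriv m) y) y :=
    fun y => (hm1.differentiable hone y).hasDerivAt
  have hcomp : ∀ (G : ℝ → ℂ), (∀ y, HasDerivAt G (deriv G y) y) → ∀ ξ,
      HasDerivAt (fun t => G (φ t)) (((2 * ξ / c : ℝ) : ℂ) * deriv G (φ ξ)) ξ := by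
    intro G hG ξ
    have h := HasDerivAt.scomp (x := ξ) (F := ℂ) (hG (φ ξ)) (hφ' ξ)
    simpa [Complex.real_smul, Function.comp_def] using h
  have hDf : ∀ ξ, HasDerivAt f (f1 ξ) ξ := by
    intro ξ
    have h1 := hcomp m hmd ξ
    have h2 : HasDerivAt (fun ξ : ℝ => (η ξ : ℂ)) ((deriv η ξ : ℝ) : ℂ) ξ :=
      ((hηd ξ).hasDerivAt).ofReal_comp
    have := h1.mul h2
    convert this using 1
    rfl
    rfl
    simp only [hf1def, Function.comp, Complex.real_smul, ofReal_mul]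
    push_cast
    ring
  have hDf1 : ∀ ξ, HasDerivAt f1 (f2 ξ) ξ := by
    intro ξ
    have hA1 := hcomp (deriv m) hmd1 ξ
    have hlin : HasDerivAt (fun ξ : ℝ => 2 * ξ / c) (2 / c) ξ := by
      have := ((hasDerivAt_id ξ).const_mul 2).div_const c
      simpa using this
    have hg : HasDerivAt (fun ξ => 2 * ξ / c * η ξ)
        (2 / c * η ξ + 2 * ξ / c * deriv η ξ) ξ := hlin.mul ((hηd ξ).hasDerivAt)
    have hA := hA1.mul hg.ofReal_comp
    have hB := (hcomp m hmd ξ).mul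
      (((hη1.differentiable hone ξ).hasDerivAt).ofReal_comp)
    have := hA.add hB
    convert this using 1
    rfl
    rfl
    simp only [hf2def, Function.comp, Complex.real_smul, ofReal_mul]
    push_cast
    ring
  -- support of f, f1, f2 in the η-interval
  have hf0 : ∀ ξ, ξ ∉ Icc l L → f ξ = 0 := by
    intro ξ hξ; simp [hfdef, hη0 ξ hξ]
  have hf10 : ∀ ξ, ξ ∉ Icc l L → f1 ξ = 0 := by
    intro ξ hξ; simp [hf1def, hη0 ξ hξ, hη0' ξ hξ]
  have hf20 : ∀ ξ, ξ ∉ Icc l L → f2 ξ = 0 := by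
    intro ξ hξ; simp [hf2def, hη0 ξ hξ, hη0' ξ hξ, hη0'' ξ hξ]
  -- support of f and f2 in the short interval around N
  have hshort : ∀ ξ, ξ ∉ Icc (N - r) (N + r) → f ξ = 0 ∧ f2 ξ = 0 := by
    intro ξ hξ
    by_cases hin : ξ ∈ Icc l L
    · by_cases hφin : |φ ξ| ≤ 2
      · exfalso
        apply hξ
        have hξl : l ≤ ξ := hin.1
        have habs : |ξ ^ 2 - M ^ 2| ≤ 2 * c := by
          have : |φ ξ| = |ξ ^ 2 - M ^ 2| / c := by
            rw [hφdef]; simp [abs_div, abs_of_pos hc]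
          rw [this, div_le_iff₀ hc] at hφin
          linarith
        have hfac : |ξ - N| * (ξ + N) = |ξ ^ 2 - N ^ 2| := by
          rw [← _root_.abs_of_nonneg (by nlinarith : (0:ℝ) ≤ ξ + N), ← abs_mul]
          congr 1; ring
        have hNsq : N ^ 2 = M ^ 2 := by rw [hNdef, _root_.sq_abs]
        have hkey : |ξ - N| * (ξ + N) ≤ 2 * c := by rw [hfac, hNsq]; exact habs
        have hrl : r * l = 2 * c := by
          rw [hrdef, hldef, hcdef, ← zpow_add₀ h2ne,
            show j - k' + 3 + (k' - 2) = j + 1 by ring, zpow_add₀ h2ne, zpow_one]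
          ring
        have hlξN : l ≤ ξ + N := by linarith
        have : |ξ - N| ≤ r := by
          nlinarith [abs_nonneg (ξ - N)]
        rcases abs_le.mp this with ⟨ha, hb⟩
        exact mem_Icc.mpr ⟨by linarith, by linarith⟩
      · have hout : φ ξ ∉ Icc (-2:ℝ) 2 := fun hin2 => hφin (abs_le.mpr ⟨hin2.1, hin2.2⟩)
        constructor
        · simp [hfdef, hm0out _ hout]
        · simp [hf2def, hm0out _ hout, hm1out _ hout, hm2out _ hout]
    · exact ⟨hf0 ξ hin, hf20 ξ hin⟩
  -- exponential has norm one
  have hexp : ∀ ξ : ℝ, ‖Complex.exp (Complex.I * x₁ * ξ)‖ = 1 := by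
    intro ξ
    have h : Complex.I * x₁ * ξ = ((x₁ * ξ : ℝ) : ℂ) * Complex.I := by push_cast; ring
    rw [h, Complex.norm_exp_ofReal_mul_I]
  -- rewrite the goal integral
  set I0 := ∫ ξ : ℝ, Complex.exp (Complex.I * x₁ * ξ) * f ξ with hI0
  have hgoalI : (∫ ξ₁ : ℝ, Complex.exp (Complex.I * x₁ * ξ₁) *
      m ((ξ₁ ^ 2 - M ^ 2) / c) * (η ξ₁ : ℂ)) = I0 := by
    rw [hI0]; congr 1; funext ξ; exact mul_assoc _ _ _
  rw [hgoalI]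
  -- integration by parts twice
  have E1 := aux_ibp x₁ l L hlL hDf hfc hf1c hf0
  have E2 := aux_ibp x₁ l L hlL hDf1 hf1c hf2c hf10
  rw [E1, ← hI0] at E2
  have hx2 : ‖∫ ξ : ℝ, Complex.exp (Complex.I * x₁ * ξ) * f2 ξ‖ = x₁ ^ 2 * ‖I0‖ := by
    rw [E2]
    have hI2 : -(Complex.I * ↑x₁) * (-(Complex.I * ↑x₁) * I0) = -(((x₁ ^ 2 : ℝ) : ℂ) * I0) := by
      have h := Complex.I_sq
      push_cast
      linear_combination (x₁:ℂ) ^ 2 * I0 * h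
    rw [hI2, norm_neg, norm_mul]
    congr 1
    rw [Complex.norm_real, Real.norm_eq_abs, _root_.abs_of_nonneg (sq_nonneg x₁)]
  -- integral bound over the short interval
  have hbound : ∀ (g : ℝ → ℂ) (D : ℝ), Continuous g →
      (∀ ξ, ξ ∉ Icc (N - r) (N + r) → g ξ = 0) → (∀ ξ, ‖g ξ‖ ≤ D) →
      ‖∫ ξ : ℝ, Complex.exp (Complex.I * x₁ * ξ) * g ξ‖ ≤ D * (2 * r) := by
    intro g D hgc hg0 hgD
    rw [← setIntegral_eq_integral_of_forall_compl_eq_zero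
      (s := Icc (N - r) (N + r)) (fun ξ hξ => by rw [hg0 ξ hξ, mul_zero])]
    have hvol : volume (Icc (N - r) (N + r)) < ⊤ := by
      rw [Real.volume_Icc]; exact ENNReal.ofReal_lt_top
    refine le_trans (norm_setIntegral_le_of_norm_le_const (C := D) hvol
      (fun ξ _ => by rw [norm_mul, hexp ξ, one_mul]; exact hgD ξ)) ?_
    rw [measureReal_def, Real.volume_Icc, ENNReal.toReal_ofReal (by linarith)]
    have e : N + r - (N - r) = 2 * r := by ring
    rw [e]
  -- pointwise bounds
  have hfb : ∀ ξ, ‖f ξ‖ ≤ C0 * K0 := by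
    intro ξ
    rw [hfdef]
    simp only
    rw [norm_mul, Complex.norm_real, Real.norm_eq_abs]
    exact mul_le_mul (hC0 _) (hb0 ξ) (abs_nonneg _) hC0n
  set B : ℝ := C2 * P ^ 2 * K0 + C1 * (2 / c * K0 + 2 * P * (K1 * (2:ℝ) ^ (-k')))
      + C0 * (K2 * (2:ℝ) ^ (-(2 * k'))) with hBdef
  have hBnn : 0 ≤ B := by
    have h1 : (0:ℝ) ≤ C2 * P ^ 2 * K0 := mul_nonneg (mul_nonneg hC2n (sq_nonneg P)) hK0n
    have h2 : (0:ℝ) ≤ C1 * (2 / c * K0 + 2 * P * (K1 * (2:ℝ) ^ (-k'))) :=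
      mul_nonneg hC1n (add_nonneg (mul_nonneg (div_nonneg (by norm_num) hc.le) hK0n)
        (mul_nonneg (mul_nonneg (by norm_num) hP0.le)
          (mul_nonneg hK1n (zpow_pos h2pos _).le)))
    have h3 : (0:ℝ) ≤ C0 * (K2 * (2:ℝ) ^ (-(2 * k'))) :=
      mul_nonneg hC0n (mul_nonneg hK2n (zpow_pos h2pos _).le)
    rw [hBdef]; linarith
  have hf2b : ∀ ξ, ‖f2 ξ‖ ≤ B := by
    intro ξ
    by_cases hin : ξ ∈ Icc l L
    · have hξpos : 0 < ξ := lt_of_lt_of_le hl hin.1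
      have hPL : P * c = 2 * L := by
        rw [hPdef, hcdef, hLdef, ← zpow_add₀ h2ne,
          show k' + 3 - j + j = (k' + 2) + 1 by ring, zpow_add₀ h2ne, zpow_one]
        ring
      have h2ξ : |2 * ξ / c| ≤ P := by
        rw [_root_.abs_of_nonneg (div_nonneg (by linarith) hc.le), div_le_iff₀ hc, hPL]
        linarith [hin.2]
      have e1 : ‖deriv (deriv m) (φ ξ) * (((2 * ξ / c) ^ 2 * η ξ : ℝ) : ℂ)‖
          ≤ C2 * (P ^ 2 * K0) := by
        rw [norm_mul, Complex.norm_real, Real.norm_eq_abs, abs_mul, _root_.abs_pow]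
        have hp : |2 * ξ / c| ^ 2 ≤ P ^ 2 := pow_le_pow_left₀ (abs_nonneg _) h2ξ 2
        have hm' : |2 * ξ / c| ^ 2 * |η ξ| ≤ P ^ 2 * K0 :=
          mul_le_mul hp (hb0 ξ) (abs_nonneg _) (pow_nonneg hP0.le 2)
        exact mul_le_mul (hC2 _) hm' (mul_nonneg (pow_nonneg (abs_nonneg _) 2) (abs_nonneg _)) hC2n
      have e2 : ‖deriv m (φ ξ) * ((2 / c * η ξ + 2 * (2 * ξ / c) * deriv η ξ : ℝ) : ℂ)‖
          ≤ C1 * (2 / c * K0 + 2 * P * (K1 * (2:ℝ) ^ (-k'))) := by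
        rw [norm_mul, Complex.norm_real, Real.norm_eq_abs]
        have habs : |2 / c * η ξ + 2 * (2 * ξ / c) * deriv η ξ|
            ≤ 2 / c * K0 + 2 * P * (K1 * (2:ℝ) ^ (-k')) := by
          refine le_trans (abs_add_le _ _) ?_
          have hh1 : |2 / c * η ξ| ≤ 2 / c * K0 := by
            rw [abs_mul, _root_.abs_of_nonneg (div_nonneg (by norm_num) hc.le : (0:ℝ) ≤ 2 / c)]
            exact mul_le_mul_of_nonneg_left (hb0 ξ) (div_nonneg (by norm_num) hc.le)
          have hh2 : |2 * (2 * ξ / c) * deriv η ξ| ≤ 2 * P * (K1 * (2:ℝ) ^ (-k')) := by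
            rw [abs_mul, abs_mul]
            have : |(2:ℝ)| * |2 * ξ / c| ≤ 2 * P := by
              rw [_root_.abs_two]; exact mul_le_mul_of_nonneg_left h2ξ (by norm_num)
            exact mul_le_mul this (hb1 ξ) (abs_nonneg _) (mul_nonneg (by norm_num) hP0.le)
          linarith
        exact mul_le_mul (hC1 _) habs (abs_nonneg _) hC1n
      have e3 : ‖m (φ ξ) * ((deriv (deriv η) ξ : ℝ) : ℂ)‖ ≤ C0 * (K2 * (2:ℝ) ^ (-(2 * k'))) := by
        rw [norm_mul, Complex.norm_real, Real.norm_eq_abs]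
        exact mul_le_mul (hC0 _) (hb2 ξ) (abs_nonneg _) hC0n
      calc ‖f2 ξ‖ ≤ ‖deriv (deriv m) (φ ξ) * (((2 * ξ / c) ^ 2 * η ξ : ℝ) : ℂ)‖
            + ‖deriv m (φ ξ) * ((2 / c * η ξ + 2 * (2 * ξ / c) * deriv η ξ : ℝ) : ℂ)‖
            + ‖m (φ ξ) * ((deriv (deriv η) ξ : ℝ) : ℂ)‖ := by
              rw [hf2def]; exact norm_add₃_le
        _ ≤ B := by rw [hBdef]; linarith
    · rw [hf20 ξ hin]
      simpa using hBnn
  -- the two main integral estimates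
  have main1 : ‖I0‖ ≤ C0 * K0 * (2 * r) := by
    rw [hI0]
    exact hbound f (C0 * K0) hfc (fun ξ hξ => (hshort ξ hξ).1) hfb
  have main2 : x₁ ^ 2 * ‖I0‖ ≤ B * (2 * r) := by
    rw [← hx2]
    exact hbound f2 B hf2c (fun ξ hξ => (hshort ξ hξ).2) hf2b
  -- power of two arithmetic
  have hz : ∀ (a : ℤ) (n : ℕ), ((2:ℝ) ^ a) ^ n = (2:ℝ) ^ (a * n) := by
    intro a n; rw [← zpow_natCast ((2:ℝ) ^ a) n, ← zpow_mul]
  have hzle1 : ∀ a : ℤ, a ≤ 0 → (2:ℝ) ^ a ≤ 1 := by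
    intro a ha
    calc (2:ℝ) ^ a ≤ (2:ℝ) ^ (0:ℤ) := zpow_le_zpow_right₀ one_le_two ha
      _ = 1 := zpow_zero 2
  have hr2 : 2 * r = 16 * u := by
    rw [hrdef, hudef, zpow_add₀ h2ne, show (2:ℝ)^(3:ℤ) = 8 by norm_num]
    ring
  have q4 : u ^ 3 * P ^ 2 = 64 * u := by
    rw [hudef, hPdef, hz, hz, ← zpow_add₀ h2ne,
      show (j - k') * ((3:ℕ):ℤ) + (k' + 3 - j) * ((2:ℕ):ℤ) = 6 + (j - k') by push_cast; ring,
      zpow_add₀ h2ne, show (2:ℝ)^(6:ℤ) = 64 by norm_num]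
  have q1 : u ^ 3 * (2 / c) ≤ u := by
    have h2c : 2 / c = (2:ℝ) ^ (1 - j) := by
      rw [zpow_sub₀ h2ne, zpow_one, hcdef]
    rw [hudef, h2c, hz, ← zpow_add₀ h2ne,
      show (j - k') * ((3:ℕ):ℤ) + (1 - j) = (j - k') + (j - 2*k' + 1) by push_cast; ring,
      zpow_add₀ h2ne]
    calc (2:ℝ) ^ (j - k') * (2:ℝ) ^ (j - 2*k' + 1) ≤ (2:ℝ) ^ (j - k') * 1 :=
          mul_le_mul_of_nonneg_left (hzle1 _ (by linarith)) (zpow_pos h2pos _).le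
      _ = (2:ℝ) ^ (j - k') := mul_one _
  have q2 : u ^ 3 * (P * (2:ℝ) ^ (-k')) ≤ u := by
    rw [hudef, hPdef, hz, ← zpow_add₀ h2ne, ← zpow_add₀ h2ne,
      show (j - k') * ((3:ℕ):ℤ) + (k' + 3 - j + -k') = (j - k') + (j - 2*k' + 3) by push_cast; ring,
      zpow_add₀ h2ne]
    calc (2:ℝ) ^ (j - k') * (2:ℝ) ^ (j - 2*k' + 3) ≤ (2:ℝ) ^ (j - k') * 1 :=
          mul_le_mul_of_nonneg_left (hzle1 _ (by linarith)) (zpow_pos h2pos _).le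
      _ = (2:ℝ) ^ (j - k') := mul_one _
  have q3 : u ^ 3 * (2:ℝ) ^ (-(2 * k')) ≤ u := by
    rw [hudef, hz, ← zpow_add₀ h2ne,
      show (j - k') * ((3:ℕ):ℤ) + -(2 * k') = (j - k') + (2*j - 4*k') by push_cast; ring,
      zpow_add₀ h2ne]
    calc (2:ℝ) ^ (j - k') * (2:ℝ) ^ (2*j - 4*k') ≤ (2:ℝ) ^ (j - k') * 1 :=
          mul_le_mul_of_nonneg_left (hzle1 _ (by linarith)) (zpow_pos h2pos _).le
      _ = (2:ℝ) ^ (j - k') := mul_one _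
  rw [hr2] at main1 main2
  have hB16 : u ^ 2 * (B * (16 * u)) ≤ (1024*C2*K0 + 16*C1*K0 + 32*C1*K1 + 16*C0*K2) * u := by
    have e : u ^ 2 * (B * (16 * u)) = 16*C2*K0*(u^3*P^2) + 16*C1*K0*(u^3*(2/c))
        + 32*C1*K1*(u^3*(P*(2:ℝ)^(-k'))) + 16*C0*K2*(u^3*((2:ℝ)^(-(2*k')))) := by
      rw [hBdef]; ring
    rw [e, q4]
    have t1 := mul_le_mul_of_nonneg_left q1 (by linarith [mul_nonneg hC1n hK0n] : (0:ℝ) ≤ 16*C1*K0)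
    have t2 := mul_le_mul_of_nonneg_left q2 (by linarith [mul_nonneg hC1n hK1n] : (0:ℝ) ≤ 32*C1*K1)
    have t3 := mul_le_mul_of_nonneg_left q3 (by linarith [mul_nonneg hC0n hK2n] : (0:ℝ) ≤ 16*C0*K2)
    linarith [t1, t2, t3]
  have hcoef : 16*C0*K0 + 1024*C2*K0 + 16*C1*K0 + 32*C1*K1 + 16*C0*K2
      ≤ 2048 * (C0 + C1 + C2 + 1) * (K0 + K1 + K2 + 1) := by
    have e : 2048 * (C0 + C1 + C2 + 1) * (K0 + K1 + K2 + 1)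
        = 2048*(C0*K0) + 2048*(C0*K1) + 2048*(C0*K2) + 2048*(C1*K0) + 2048*(C1*K1)
        + 2048*(C1*K2) + 2048*(C2*K0) + 2048*(C2*K1) + 2048*(C2*K2)
        + 2048*C0 + 2048*C1 + 2048*C2 + 2048*K0 + 2048*K1 + 2048*K2 + 2048 := by ring
    rw [e]
    linarith [mul_nonneg hC0n hK0n, mul_nonneg hC0n hK1n, mul_nonneg hC0n hK2n,
      mul_nonneg hC1n hK0n, mul_nonneg hC1n hK1n, mul_nonneg hC1n hK2n,
      mul_nonneg hC2n hK0n, mul_nonneg hC2n hK1n, mul_nonneg hC2n hK2n,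
      hC0n, hC1n, hC2n, hK0n, hK1n, hK2n]
  -- conclude
  have hs : (0:ℝ) < 1 + (u * x₁) ^ 2 := by positivity
  rw [← div_eq_mul_inv, le_div_iff₀ hs]
  have expand : ‖I0‖ * (1 + (u * x₁) ^ 2) = ‖I0‖ + u ^ 2 * (x₁ ^ 2 * ‖I0‖) := by ring
  rw [expand]
  have h2' : u ^ 2 * (x₁ ^ 2 * ‖I0‖) ≤ u ^ 2 * (B * (16 * u)) :=
    mul_le_mul_of_nonneg_left main2 (sq_nonneg u)
  have hfinal := mul_le_mul_of_nonneg_right hcoef hu.le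
  linarith [main1, h2', hB16, hfinal]
end
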